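/- Uniform-in-time stability of the full discretization dG(q)–cG(r) for q ∈ {0,1} with vanishing initial data. Let q ∈ {0,1} and l ∈ ℝ. There is a constant C > 0, independent of T, N, the mesh and h, such that if U = (U₁,U₂) ∈ 𝒱_{h,q} satisfies B(U,V) = Σ_{n=1}^N ∫_{I_n} ( a(f₁,V₁) + (f₂,V₂) ) dt for all V ∈ 𝒱_{h,q} (the generalized discrete problem with u_{h,0} = 0, v_{h,0} = 0), then sup_{t∈(0,T)} ‖U₁(t)‖_{h,l+1} + sup_{t∈(0,T)} ‖U₂(t)‖_{h,l} ≤ C ∫₀^T ( ‖R_h f₁(t)‖_{h,l+1} + ‖P_h f₂(t)‖_{h,l} ) dt. -/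

import Mathlib

noncomputable section

open scoped RealInnerProductSpace BigOperators
open MeasureTheory

/-- Squared fractional-order norm `‖v‖_α² = Σ_k λ_k^α (v,φ_k)²`. -/
def hsNormSq {H : Type*} [NormedAddCommGroup H] [InnerProductSpace ℝ H]
    (φ : ℕ → H) (lam : ℕ → ℝ) (α : ℝ) (v : H) : ℝ :=
  ∑' k, lam k ^ α * ⟪v, φ k⟫ ^ 2

/-- Fractional-order norm `‖v‖_α`. -/
def hsNorm {H : Type*} [NormedAddCommGroup H] [InnerProductSpace ℝ H]
    (φ : ℕ → H) (lam : ℕ → ℝ) (α : ℝ) (v : H) : ℝ :=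
  Real.sqrt (hsNormSq φ lam α v)

/-- Membership in the fractional-order space `Ḣ^α`. -/
def MemHs {H : Type*} [NormedAddCommGroup H] [InnerProductSpace ℝ H]
    (φ : ℕ → H) (lam : ℕ → ℝ) (α : ℝ) (v : H) : Prop :=
  Summable (fun k => lam k ^ α * ⟪v, φ k⟫ ^ 2)

/-- Weighted spectral pairing `Σ_k λ_k^l (u,φ_k)(v,φ_k)`.
`aPow φ lam 1 u v = a(u,v)`, `aPow φ lam (l+1) u v = a(u, A^l v)` and
`aPow φ lam l u v = (u, A^l v)`. -/
def aPow {H : Type*} [NormedAddCommGroup H] [InnerProductSpace ℝ H]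
    (φ : ℕ → H) (lam : ℕ → ℝ) (l : ℝ) (u v : H) : ℝ :=
  ∑' k, lam k ^ l * ⟪u, φ k⟫ * ⟪v, φ k⟫

/-- The energy bilinear form `a(u,v) = Σ_k λ_k (u,φ_k)(v,φ_k)`. -/
def aForm {H : Type*} [NormedAddCommGroup H] [InnerProductSpace ℝ H]
    (φ : ℕ → H) (lam : ℕ → ℝ) (u v : H) : ℝ :=
  aPow φ lam 1 u v

/-- The operator `A`, determined by `A φ_k = λ_k φ_k`. -/
def Aop {H : Type*} [NormedAddCommGroup H] [InnerProductSpace ℝ H]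
    (φ : ℕ → H) (lam : ℕ → ℝ) (v : H) : H :=
  ∑' k, (lam k * ⟪v, φ k⟫) • φ k

/-- Value at time `s` of the polynomial of degree ≤ q (with coefficients `c n ·`)
attached to the `n`-th time subinterval. -/
def pval {H : Type*} [NormedAddCommGroup H] [InnerProductSpace ℝ H]
    (q : ℕ) (c : ℕ → ℕ → H) (n : ℕ) (s : ℝ) : H :=
  ∑ j ∈ Finset.range (q + 1), s ^ j • c n j

/-- Time derivative of `pval`. -/
def pderiv {H : Type*} [NormedAddCommGroup H] [InnerProductSpace ℝ H]
    (q : ℕ) (c : ℕ → ℕ → H) (n : ℕ) (s : ℝ) : H :=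
  ∑ j ∈ Finset.range (q + 1), ((j : ℝ) * s ^ (j - 1)) • c n j

/-- The dG bilinear form `B((u₁,u₂),(v₁,v₂))`, where the piecewise polynomials
`u₁, u₂, v₁, v₂` are described by their coefficient families `c1, c2, d1, d2`
(on the mesh `0 = tt 0 < tt 1 < ⋯ < tt N`). -/
def Bform {H : Type*} [NormedAddCommGroup H] [InnerProductSpace ℝ H]
    (φ : ℕ → H) (lam : ℕ → ℝ) (tt : ℕ → ℝ) (N q : ℕ)
    (c1 c2 d1 d2 : ℕ → ℕ → H) : ℝ :=
  (∑ n ∈ Finset.Icc 1 N, ∫ s in tt (n-1)..tt n,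
      (aForm φ lam (pderiv q c1 n s) (pval q d1 n s)
        - aForm φ lam (pval q c2 n s) (pval q d1 n s)
        + ⟪pderiv q c2 n s, pval q d2 n s⟫
        + aForm φ lam (pval q c1 n s) (pval q d2 n s)))
  + (∑ n ∈ Finset.Icc 1 (N-1),
      (aForm φ lam (pval q c1 (n+1) (tt n) - pval q c1 n (tt n)) (pval q d1 (n+1) (tt n))
        + ⟪pval q c2 (n+1) (tt n) - pval q c2 n (tt n), pval q d2 (n+1) (tt n)⟫))
  + aForm φ lam (pval q c1 1 (tt 0)) (pval q d1 1 (tt 0))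
  + ⟪pval q c2 1 (tt 0), pval q d2 1 (tt 0)⟫

/-- Supremum of `g` over the open interval `(a,b)`. -/
def supIoo (g : ℝ → ℝ) (a b : ℝ) : ℝ :=
  sSup (g '' Set.Ioo a b)

/-- Squared discrete fractional norm `‖v‖_{h,s}² = ‖A_h^{s/2} v‖²`, expressed through
an orthonormal eigenbasis `e` of `A_h` on `S_h` with eigenvalues `μ`. -/
def hNormSqh {H : Type*} [NormedAddCommGroup H] [InnerProductSpace ℝ H]
    {m : ℕ} (e : Fin m → H) (μ : Fin m → ℝ) (s : ℝ) (v : H) : ℝ :=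
  ∑ i, μ i ^ s * ⟪v, e i⟫ ^ 2

/-- Discrete fractional norm `‖v‖_{h,s}`. -/
def hNormh {H : Type*} [NormedAddCommGroup H] [InnerProductSpace ℝ H]
    {m : ℕ} (e : Fin m → H) (μ : Fin m → ℝ) (s : ℝ) (v : H) : ℝ :=
  Real.sqrt (hNormSqh e μ s v)

/-- Discrete weighted pairing: `aPowh e μ (l+1) u v = a(u, A_h^l v)` and
`aPowh e μ l u v = (u, A_h^l v)` for `u, v ∈ S_h`. -/
def aPowh {H : Type*} [NormedAddCommGroup H] [InnerProductSpace ℝ H]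
    {m : ℕ} (e : Fin m → H) (μ : Fin m → ℝ) (l : ℝ) (u v : H) : ℝ :=
  ∑ i, μ i ^ l * ⟪u, e i⟫ * ⟪v, e i⟫


/-!
Test the discrete problem, on the first `M` time intervals only, with `(A_h^l U₁, A_h^l U₂)`.
The coupling terms `-a(U₂, A_h^l U₁) + a(U₁, A_h^l U₂)` cancel, the time derivatives integrate
exactly and the jump terms satisfy `2 (x - y, x) = |x|² - |y|² + |x - y|²`, which gives the
energy identity
  `E(t_M⁻) + Σ_{0<n<M} E([U]_n) + E(0⁺) = 2 Σ_{n≤M} ∫_{I_n} (a(R_h f₁, A_h^l U₁) + (P_h f₂, A_h^l U₂))`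
for `E(u, v) = ‖u‖²_{h,l+1} + ‖v‖²_{h,l}`. By Cauchy–Schwarz the right-hand side is at most
`2 K S`, where `K = ∫₀ᵀ (‖R_h f₁‖_{h,l+1} + ‖P_h f₂‖_{h,l})` and `S = S₁ + S₂` is the sum of the two
suprema. So the energy is at most `2 K S` at every `t_n⁻` and every jump, hence at most `8 K S`
at every `t_n⁺`. For `q ≤ 1` the energy is convex in `t` on each interval, so `8 K S` bounds it
on all of `(0, T)`, and `S² ≤ 2 (S₁² + S₂²) ≤ 32 K S` gives `S ≤ 32 K`.
-/

open Set MeasureTheory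

lemma sqrt_sum_sq_le_sum_abs {ι : Type*} (s : Finset ι) (f : ι → ℝ) :
    √(∑ i ∈ s, f i ^ 2) ≤ ∑ i ∈ s, |f i| :=
  Real.sqrt_le_iff.mpr ⟨Finset.sum_nonneg fun i _ => abs_nonneg _, by
    simpa only [sq_abs] using
      Finset.sum_sq_le_sq_sum_of_nonneg (s := s) (f := fun i => |f i|) fun i _ => abs_nonneg _⟩

lemma add_le_of_sq_le_mul_add {x y K : ℝ} (hx : 0 ≤ x) (hy : 0 ≤ y) (hK : 0 ≤ K)
    (hx' : x ^ 2 ≤ K * (x + y)) (hy' : y ^ 2 ≤ K * (x + y)) : x + y ≤ 4 * K := by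
  rcases (add_nonneg hx hy).eq_or_lt with h | h
  · rw [← h]; positivity
  · refine le_of_mul_le_mul_right ?_ h
    nlinarith [sq_nonneg (x - y)]

lemma convexOn_finsetSum {E ι : Type*} [AddCommGroup E] [Module ℝ E] {D : Set E}
    (hD : Convex ℝ D) (s : Finset ι) {f : ι → E → ℝ} (hf : ∀ i ∈ s, ConvexOn ℝ D (f i)) :
    ConvexOn ℝ D fun x => ∑ i ∈ s, f i x := by
  classical
  induction s using Finset.induction_on with
  | empty => simpa using convexOn_const (0 : ℝ) hD
  | insert a s ha ih =>
    simp only [Finset.sum_insert ha]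
    exact (hf a (s.mem_insert_self a)).add (ih fun i hi => hf i (Finset.mem_insert_of_mem hi))

lemma convexOn_mul_sq_add_mul {w : ℝ} (hw : 0 ≤ w) (x y : ℝ) :
    ConvexOn ℝ univ fun t : ℝ => w * (x + t * y) ^ 2 := by
  have h := ((Even.convexOn_pow (𝕜 := ℝ) even_two).comp_affineMap
    (AffineMap.lineMap x (x + y))).smul hw
  rw [preimage_univ] at h
  refine h.congr fun t _ => ?_
  simp only [Function.comp_apply, AffineMap.lineMap_apply_ring', smul_eq_mul]
  ring

lemma supIoo_nonneg {g : ℝ → ℝ} {a b : ℝ} (hab : a < b) (hg : ∀ t, 0 ≤ g t)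
    (hb : BddAbove (g '' Ioo a b)) : 0 ≤ supIoo g a b :=
  (hg _).trans (le_csSup hb ⟨(a + b) / 2, ⟨by linarith, by linarith⟩, rfl⟩)

lemma bddAbove_image_of_sq_le {g : ℝ → ℝ} {A : Set ℝ} {X : ℝ} (h : ∀ t ∈ A, g t ^ 2 ≤ X) :
    BddAbove (g '' A) :=
  ⟨√X, fun _ ⟨t, ht, hgt⟩ => hgt ▸ Real.le_sqrt_of_sq_le (h t ht)⟩

lemma sq_supIoo_le {g : ℝ → ℝ} {a b X : ℝ} (hab : a < b) (hg : ∀ t, 0 ≤ g t)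
    (h : ∀ t ∈ Ioo a b, g t ^ 2 ≤ X) : supIoo g a b ^ 2 ≤ X := by
  have hX : 0 ≤ X := (sq_nonneg _).trans (h ((a + b) / 2) ⟨by linarith, by linarith⟩)
  have hle : supIoo g a b ≤ √X :=
    csSup_le (nonempty_Ioo.2 hab |>.image g) fun _ ⟨t, ht, hgt⟩ =>
      hgt ▸ Real.le_sqrt_of_sq_le (h t ht)
  calc supIoo g a b ^ 2 ≤ √X ^ 2 :=
        pow_le_pow_left₀ (supIoo_nonneg hab hg (bddAbove_image_of_sq_le h)) hle 2
    _ = X := Real.sq_sqrt hX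

section Mesh

lemma sum_Icc_ite_le {β : Type*} [AddCommMonoid β] {M N : ℕ} (hMN : M ≤ N) (f : ℕ → β) :
    ∑ n ∈ Finset.Icc 1 N, (if n ≤ M then f n else 0) = ∑ n ∈ Finset.Icc 1 M, f n := by
  rw [← Finset.sum_filter]
  congr 1
  ext n
  simp only [Finset.mem_filter, Finset.mem_Icc]
  omega

lemma sum_Icc_one_eq_sum_range {β : Type*} [AddCommMonoid β] (f : ℕ → β) (M : ℕ) :
    ∑ n ∈ Finset.Icc 1 M, f n = ∑ k ∈ Finset.range M, f (k + 1) := by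
  rw [Finset.range_eq_Ico, Finset.sum_Ico_add' f 0 M 1]
  rfl

lemma sum_Icc_sub_add_sum_Icc_sub {β : Type*} [AddCommGroup β] (a b : ℕ → β) {M : ℕ}
    (hM : 1 ≤ M) :
    ∑ n ∈ Finset.Icc 1 M, (a n - b n) + ∑ n ∈ Finset.Icc 1 (M - 1), (b (n + 1) - a n)
      = a M - b 1 := by
  obtain ⟨K, rfl⟩ := Nat.exists_eq_add_of_le' hM
  rw [Nat.add_sub_cancel, sum_Icc_one_eq_sum_range, sum_Icc_one_eq_sum_range]
  clear hM
  induction K with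
  | zero => simp
  | succ K ih =>
    rw [Finset.sum_range_succ, Finset.sum_range_succ (fun k => b (k + 1 + 1) - a (k + 1)),
      ← sub_add_sub_cancel (a (K + 1 + 1)) (a (K + 1)) (b 1), ← ih]
    abel

lemma exists_mem_Icc_mem_Ioc {tt : ℕ → ℝ} {N : ℕ} {t : ℝ} (ht : t ∈ Ioc (tt 0) (tt N)) :
    ∃ n ∈ Finset.Icc 1 N, t ∈ Ioc (tt (n - 1)) (tt n) := by
  classical
  have hex : ∃ n, t ≤ tt n := ⟨N, ht.2⟩
  have hn0 : Nat.find hex ≠ 0 := fun h => (Nat.find_spec hex).not_gt (h ▸ ht.1)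
  refine ⟨Nat.find hex, Finset.mem_Icc.2 ⟨Nat.one_le_iff_ne_zero.2 hn0, Nat.find_min' hex ht.2⟩,
    lt_of_not_ge (Nat.find_min hex (by omega)), Nat.find_spec hex⟩

lemma mesh_mono {tt : ℕ → ℝ} {N : ℕ} (htt : ∀ n < N, tt n < tt (n + 1)) {a b : ℕ} (hab : a ≤ b)
    (hbN : b ≤ N) : tt a ≤ tt b :=
  (strictMonoOn_Iic_of_lt_succ fun n hn => by
    simpa only [Order.succ_eq_add_one] using htt n hn).monotoneOn
    (mem_Iic.2 (hab.trans hbN)) (mem_Iic.2 hbN) hab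

lemma uIcc_mesh_subset {tt : ℕ → ℝ} {N : ℕ} (htt : ∀ n < N, tt n < tt (n + 1)) {a b : ℕ}
    (hab : a ≤ b) (hbN : b ≤ N) : uIcc (tt a) (tt b) ⊆ uIcc (tt 0) (tt N) :=
  uIcc_subset_uIcc
    (mem_uIcc_of_le (mesh_mono htt (Nat.zero_le _) (hab.trans hbN))
      (mesh_mono htt (hab.trans hbN) le_rfl))
    (mem_uIcc_of_le (mesh_mono htt (Nat.zero_le _) hbN) (mesh_mono htt hbN le_rfl))

lemma Ioo_mesh_subset {tt : ℕ → ℝ} {N : ℕ} (htt : ∀ n < N, tt n < tt (n + 1)) {n : ℕ}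
    (hn : n ∈ Finset.Icc 1 N) : Ioo (tt (n - 1)) (tt n) ⊆ Ioo (tt 0) (tt N) := by
  rw [Finset.mem_Icc] at hn
  exact Ioo_subset_Ioo (mesh_mono htt (Nat.zero_le _) (by omega)) (mesh_mono htt hn.2 le_rfl)

lemma sum_integral_le_integral {tt : ℕ → ℝ} {N M : ℕ} (htt : ∀ n < N, tt n < tt (n + 1))
    (hMN : M ≤ N) {G : ℕ → ℝ → ℝ} {F : ℝ → ℝ} (hF : IntervalIntegrable F volume (tt 0) (tt N))
    (hF0 : ∀ t, 0 ≤ F t) (hG : ∀ n ∈ Finset.Icc 1 N, IntervalIntegrable (G n) volume (tt 0) (tt N))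
    (hGF : ∀ n ∈ Finset.Icc 1 N, ∀ s ∈ Ioo (tt (n - 1)) (tt n), G n s ≤ F s) :
    ∑ n ∈ Finset.Icc 1 M, ∫ s in tt (n - 1)..tt n, G n s ≤ ∫ s in tt 0..tt N, F s := by
  calc ∑ n ∈ Finset.Icc 1 M, ∫ s in tt (n - 1)..tt n, G n s
      ≤ ∑ n ∈ Finset.Icc 1 M, ∫ s in tt (n - 1)..tt n, F s := by
        refine Finset.sum_le_sum fun n hn => ?_
        have hnN : n ∈ Finset.Icc 1 N := by simp only [Finset.mem_Icc] at hn ⊢; omega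
        have hn' := Finset.mem_Icc.1 hnN
        exact intervalIntegral.integral_mono_on_of_le_Ioo (mesh_mono htt (by omega) hn'.2)
          ((hG n hnN).mono_set (uIcc_mesh_subset htt (by omega) hn'.2))
          (hF.mono_set (uIcc_mesh_subset htt (by omega) hn'.2)) (hGF n hnN)
    _ = ∫ s in tt 0..tt M, F s := by
        rw [sum_Icc_one_eq_sum_range]
        simp only [Nat.add_sub_cancel]
        exact intervalIntegral.sum_integral_adjacent_intervals fun k hk =>
          hF.mono_set (uIcc_mesh_subset htt (Nat.le_succ k) (by omega))
    _ ≤ ∫ s in tt 0..tt N, F s :=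
        intervalIntegral.integral_mono_interval le_rfl (mesh_mono htt (Nat.zero_le M) hMN)
          (mesh_mono htt hMN le_rfl) (ae_of_all _ hF0) hF

lemma max_le_of_energy_identity {E : ℕ → ℝ → ℝ} {J : ℕ → ℝ} {tt : ℕ → ℝ} {N : ℕ} {B : ℝ}
    (hE : ∀ n t, 0 ≤ E n t) (hJ : ∀ n, 0 ≤ J n)
    (hid : ∀ M ∈ Finset.Icc 1 N, E M (tt M) + ∑ n ∈ Finset.Icc 1 (M - 1), J n + E 1 (tt 0) ≤ B)
    (hstep : ∀ n, E (n + 1) (tt n) ≤ 2 * E n (tt n) + 2 * J n) :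
    ∀ n ∈ Finset.Icc 1 N, max (E n (tt (n - 1))) (E n (tt n)) ≤ 4 * B := by
  have hnode : ∀ M ∈ Finset.Icc 1 N, E M (tt M) ≤ B ∧ E 1 (tt 0) ≤ B ∧
      ∀ k ∈ Finset.Icc 1 (M - 1), J k ≤ B := fun M hM => by
    have hsum : 0 ≤ ∑ n ∈ Finset.Icc 1 (M - 1), J n := Finset.sum_nonneg fun n _ => hJ n
    refine ⟨by linarith [hid M hM, hE 1 (tt 0)], by linarith [hid M hM, hE M (tt M)],
      fun k hk => ?_⟩
    linarith [hid M hM, hE 1 (tt 0), hE M (tt M),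
      Finset.single_le_sum (fun n _ => hJ n) hk]
  intro n hn
  have hB : 0 ≤ B := (hE _ _).trans (hnode n hn).1
  refine max_le ?_ (by linarith [(hnode n hn).1])
  obtain ⟨k, rfl⟩ : ∃ k, n = k + 1 := ⟨n - 1, by rw [Finset.mem_Icc] at hn; omega⟩
  rcases Nat.eq_zero_or_pos k with rfl | hk
  · linarith [(hnode 1 hn).2.1]
  · have hk' : k ∈ Finset.Icc 1 N := by rw [Finset.mem_Icc] at hn ⊢; omega
    have hJk : J k ≤ B := (hnode (k + 1) hn).2.2 k (by rw [Finset.mem_Icc]; omega)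
    rw [Nat.add_sub_cancel]
    linarith [hstep k, (hnode k hk').1]

end Mesh

section SpectralForm
variable {H : Type*} [NormedAddCommGroup H] [InnerProductSpace ℝ H] (φ : ℕ → H) (lam : ℕ → ℝ)

lemma summable_aForm_term (hlam : ∀ k, 0 ≤ lam k) {u v : H} (hu : MemHs φ lam 1 u)
    (hv : MemHs φ lam 1 v) : Summable fun k => lam k ^ (1 : ℝ) * ⟪u, φ k⟫ * ⟪v, φ k⟫ := by
  refine Summable.of_norm_bounded ((hu.add hv).div_const 2) fun k => ?_
  have hw : 0 ≤ lam k ^ (1 : ℝ) := Real.rpow_nonneg (hlam k) 1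
  rw [Real.norm_eq_abs, abs_le]
  constructor <;> nlinarith [mul_nonneg hw (sq_nonneg (⟪u, φ k⟫ - ⟪v, φ k⟫)),
    mul_nonneg hw (sq_nonneg (⟪u, φ k⟫ + ⟪v, φ k⟫))]

lemma aForm_comm (u v : H) : aForm φ lam u v = aForm φ lam v u := by
  simp only [aForm, aPow, mul_right_comm]

lemma aForm_zero_right (u : H) : aForm φ lam u 0 = 0 := by
  simp [aForm, aPow]

lemma aForm_sub_left (hlam : ∀ k, 0 ≤ lam k) {u w v : H} (hu : MemHs φ lam 1 u)
    (hw : MemHs φ lam 1 w) (hv : MemHs φ lam 1 v) :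
    aForm φ lam (u - w) v = aForm φ lam u v - aForm φ lam w v := by
  simp only [aForm, aPow, inner_sub_left, mul_sub, sub_mul]
  exact (summable_aForm_term φ lam hlam hu hv).tsum_sub (summable_aForm_term φ lam hlam hw hv)

lemma aForm_sum_smul_right (hlam : ∀ k, 0 ≤ lam k) {ι : Type*} {s : Finset ι} {u : H}
    {v : ι → H} (hu : MemHs φ lam 1 u) (hv : ∀ i ∈ s, MemHs φ lam 1 (v i)) (w : ι → ℝ) :
    aForm φ lam u (∑ i ∈ s, w i • v i) = ∑ i ∈ s, w i * aForm φ lam u (v i) := by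
  simp only [aForm, aPow, sum_inner, real_inner_smul_left, Finset.mul_sum, ← tsum_mul_left]
  rw [← Summable.tsum_finsetSum fun i hi =>
    (summable_aForm_term φ lam hlam hu (hv i hi)).mul_left (w i)]
  exact tsum_congr fun k => Finset.sum_congr rfl fun i _ => by ring

lemma abs_aForm_le (hlam : ∀ k, 0 ≤ lam k) {u v : H} (hu : MemHs φ lam 1 u)
    (hv : MemHs φ lam 1 v) : |aForm φ lam u v| ≤ hsNorm φ lam 1 u * hsNorm φ lam 1 v := by
  have hw : ∀ k, 0 ≤ lam k ^ (1 : ℝ) := fun k => Real.rpow_nonneg (hlam k) 1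
  have habs : Summable fun k => |lam k ^ (1 : ℝ) * ⟪u, φ k⟫ * ⟪v, φ k⟫| :=
    (summable_aForm_term φ lam hlam hu hv).abs
  have hsq : ∀ k, |lam k ^ (1 : ℝ) * ⟪u, φ k⟫ * ⟪v, φ k⟫|
      = √(lam k ^ (1 : ℝ) * ⟪u, φ k⟫ ^ 2) * √(lam k ^ (1 : ℝ) * ⟪v, φ k⟫ ^ 2) := fun k => by
    rw [← Real.sqrt_mul (mul_nonneg (hw k) (sq_nonneg _)), ← Real.sqrt_sq_eq_abs]
    ring_nf
  have htri : |aForm φ lam u v| ≤ ∑' k, |lam k ^ (1 : ℝ) * ⟪u, φ k⟫ * ⟪v, φ k⟫| := by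
    simpa only [aForm, aPow, Real.norm_eq_abs] using
      norm_tsum_le_tsum_norm (f := fun k => lam k ^ (1 : ℝ) * ⟪u, φ k⟫ * ⟪v, φ k⟫) habs
  refine htri.trans (habs.tsum_le_of_sum_le fun F => ?_)
  simp only [hsq]
  refine (Real.sum_sqrt_mul_sqrt_le F (fun k => mul_nonneg (hw k) (sq_nonneg _))
    (fun k => mul_nonneg (hw k) (sq_nonneg _))).trans ?_
  exact mul_le_mul (Real.sqrt_le_sqrt (hu.sum_le_tsum F fun k _ => mul_nonneg (hw k) (sq_nonneg _)))
    (Real.sqrt_le_sqrt (hv.sum_le_tsum F fun k _ => mul_nonneg (hw k) (sq_nonneg _)))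
    (Real.sqrt_nonneg _) (Real.sqrt_nonneg _)

lemma aestronglyMeasurable_aForm_left (hlam : ∀ k, 0 ≤ lam k) {α : Type*} [MeasurableSpace α]
    {ν : Measure α} {f : α → H} (hf : AEStronglyMeasurable f ν) (hfV : ∀ x, MemHs φ lam 1 (f x))
    {v : H} (hv : MemHs φ lam 1 v) : AEStronglyMeasurable (fun x => aForm φ lam (f x) v) ν :=
  aestronglyMeasurable_of_tendsto_ae Filter.atTop
    (fun K => Finset.aestronglyMeasurable_fun_sum (Finset.range K) fun _ _ =>
      ((hf.inner aestronglyMeasurable_const).const_mul _).mul_const _)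
    (ae_of_all _ fun x => (summable_aForm_term φ lam hlam (hfV x) hv).hasSum.tendsto_sum_nat)

lemma intervalIntegrable_aForm_left (hlam : ∀ k, 0 ≤ lam k) {f : ℝ → H} {a b : ℝ}
    (hf : AEStronglyMeasurable f volume) (hfV : ∀ t, MemHs φ lam 1 (f t))
    (hfi : IntervalIntegrable (fun t => hsNorm φ lam 1 (f t)) volume a b) {v : H}
    (hv : MemHs φ lam 1 v) : IntervalIntegrable (fun t => aForm φ lam (f t) v) volume a b := by
  refine (hfi.mul_const (hsNorm φ lam 1 v)).mono_fun
    (aestronglyMeasurable_aForm_left φ lam hlam hf hfV hv).restrict (ae_of_all _ fun t => ?_)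
  simp only [Real.norm_eq_abs]
  rw [abs_of_nonneg (a := hsNorm φ lam 1 (f t) * _) (by unfold hsNorm; positivity)]
  exact abs_aForm_le φ lam hlam (hfV t) hv

end SpectralForm

section DiscreteNorms
variable {H : Type*} [NormedAddCommGroup H] [InnerProductSpace ℝ H] {m : ℕ}
  (e : Fin m → H) (μ : Fin m → ℝ)

lemma hNormSqh_nonneg (hμ : ∀ i, 0 ≤ μ i) (α : ℝ) (v : H) : 0 ≤ hNormSqh e μ α v :=
  Finset.sum_nonneg fun i _ => mul_nonneg (Real.rpow_nonneg (hμ i) α) (sq_nonneg _)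

lemma hNormh_nonneg (α : ℝ) (v : H) : 0 ≤ hNormh e μ α v :=
  Real.sqrt_nonneg _

lemma hNormh_sq (hμ : ∀ i, 0 ≤ μ i) (α : ℝ) (v : H) : hNormh e μ α v ^ 2 = hNormSqh e μ α v :=
  Real.sq_sqrt (hNormSqh_nonneg e μ hμ α v)

lemma hNormSqh_add_le (hμ : ∀ i, 0 ≤ μ i) (α : ℝ) (u v : H) :
    hNormSqh e μ α (u + v) ≤ 2 * hNormSqh e μ α u + 2 * hNormSqh e μ α v := by
  simp only [hNormSqh, inner_add_left, Finset.mul_sum, ← Finset.sum_add_distrib]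
  refine Finset.sum_le_sum fun i _ => ?_
  nlinarith [mul_nonneg (Real.rpow_nonneg (hμ i) α) (sq_nonneg (⟪u, e i⟫ - ⟪v, e i⟫))]

lemma aPowh_comm (α : ℝ) (u v : H) : aPowh e μ α u v = aPowh e μ α v u := by
  simp only [aPowh, mul_right_comm]

lemma aPowh_self (α : ℝ) (v : H) : aPowh e μ α v v = hNormSqh e μ α v := by
  simp only [aPowh, hNormSqh, mul_assoc, sq]

lemma two_mul_aPowh_sub_left_self (α : ℝ) (u v : H) :
    2 * aPowh e μ α (u - v) u = hNormSqh e μ α u - hNormSqh e μ α v + hNormSqh e μ α (u - v) := by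
  simp only [aPowh, hNormSqh, inner_sub_left, Finset.mul_sum, ← Finset.sum_sub_distrib,
    ← Finset.sum_add_distrib]
  exact Finset.sum_congr rfl fun i _ => by ring

lemma aPowh_le_hNormh_mul (hμ : ∀ i, 0 ≤ μ i) (α : ℝ) (u v : H) :
    aPowh e μ α u v ≤ hNormh e μ α u * hNormh e μ α v := by
  have hw : ∀ i, 0 ≤ μ i ^ α := fun i => Real.rpow_nonneg (hμ i) α
  calc aPowh e μ α u v = ∑ i, (√(μ i ^ α) * ⟪u, e i⟫) * (√(μ i ^ α) * ⟪v, e i⟫) :=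
        Finset.sum_congr rfl fun i _ => by
          rw [mul_mul_mul_comm, Real.mul_self_sqrt (hw i), mul_assoc]
    _ ≤ _ := Real.sum_mul_le_sqrt_mul_sqrt _ _ _
    _ = hNormh e μ α u * hNormh e μ α v := by
      simp only [mul_pow, Real.sq_sqrt (hw _)]; rfl

/-- `A_h^α`, diagonal in the eigenbasis `e` of `A_h`. -/
def discretePow (α : ℝ) : H →ₗ[ℝ] H :=
  ∑ i, μ i ^ α • (innerₛₗ ℝ (e i)).smulRight (e i)

lemma discretePow_apply (α : ℝ) (v : H) :
    discretePow e μ α v = ∑ i, (μ i ^ α * ⟪v, e i⟫) • e i := by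
  simp [discretePow, mul_smul, real_inner_comm]

lemma inner_discretePow (α : ℝ) (u v : H) : ⟪u, discretePow e μ α v⟫ = aPowh e μ α u v := by
  simp only [discretePow_apply, inner_sum, real_inner_smul_right, aPowh]
  exact Finset.sum_congr rfl fun i _ => by ring

lemma discretePow_mem {S : Submodule ℝ H} (heS : ∀ i, e i ∈ S) (α : ℝ) (v : H) :
    discretePow e μ α v ∈ S := by
  rw [discretePow_apply]
  exact S.sum_mem fun i _ => S.smul_mem _ (heS i)

lemma intervalIntegrable_hNormh (hμ : ∀ i, 0 ≤ μ i) (α : ℝ) {g : ℝ → H} {a b : ℝ}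
    (hg : ∀ i, IntervalIntegrable (fun t => ⟪g t, e i⟫) volume a b) :
    IntervalIntegrable (fun t => hNormh e μ α (g t)) volume a b := by
  have hw : ∀ i, 0 ≤ μ i ^ α := fun i => Real.rpow_nonneg (hμ i) α
  have hmeas :
      AEStronglyMeasurable (fun t => hNormh e μ α (g t)) (volume.restrict (Set.uIoc a b)) :=
    Real.continuous_sqrt.comp_aestronglyMeasurable (Finset.aestronglyMeasurable_fun_sum _
      fun i _ => ((hg i).def'.aestronglyMeasurable.pow 2).const_mul _)
  have hdom := IntervalIntegrable.sum Finset.univ fun i _ => ((hg i).abs.const_mul √(μ i ^ α))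
  refine hdom.mono_fun hmeas (ae_of_all _ fun t => ?_)
  have h := sqrt_sum_sq_le_sum_abs Finset.univ fun i => √(μ i ^ α) * ⟪g t, e i⟫
  simp only [mul_pow, Real.sq_sqrt (hw _), abs_mul, abs_of_nonneg (Real.sqrt_nonneg _)] at h
  simp only [Real.norm_eq_abs, Finset.sum_apply]
  rw [hNormh, abs_of_nonneg (Real.sqrt_nonneg _)]
  exact h.trans (le_abs_self _)

lemma intervalIntegrable_aPowh (α : ℝ) {g p : ℝ → H} {a b : ℝ}
    (hg : ∀ i, IntervalIntegrable (fun t => ⟪g t, e i⟫) volume a b) (hp : Continuous p) :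
    IntervalIntegrable (fun t => aPowh e μ α (g t) (p t)) volume a b := by
  have h := IntervalIntegrable.sum Finset.univ fun i _ =>
    ((hg i).const_mul (μ i ^ α)).mul_continuousOn
      (by fun_prop : Continuous fun t => ⟪p t, e i⟫).continuousOn
  simpa only [aPowh, Finset.sum_fn] using h

end DiscreteNorms

section DiscreteEigenbasis
variable {H : Type*} [NormedAddCommGroup H] [InnerProductSpace ℝ H] {φ : ℕ → H} {lam : ℕ → ℝ}
  {S : Submodule ℝ H} {m : ℕ} {e : Fin m → H} {μ : Fin m → ℝ}

variable (φ lam S e μ) in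
structure IsDiscreteEigenbasis : Prop where
  mem : ∀ i, e i ∈ S
  pos : ∀ i, 0 < μ i
  aForm_eq : ∀ i, ∀ w ∈ S, aForm φ lam (e i) w = μ i * ⟪e i, w⟫

lemma IsDiscreteEigenbasis.aForm_right_eq (he : IsDiscreteEigenbasis φ lam S e μ) {u : H}
    (hu : u ∈ S) (i : Fin m) : aForm φ lam u (e i) = μ i * ⟪u, e i⟫ := by
  rw [aForm_comm, he.aForm_eq i u hu, real_inner_comm]

lemma IsDiscreteEigenbasis.aForm_discretePow (he : IsDiscreteEigenbasis φ lam S e μ)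
    (hlam : ∀ k, 0 ≤ lam k) (hSV : ∀ v ∈ S, MemHs φ lam 1 v) {u : H} (hu : u ∈ S)
    (α : ℝ) (v : H) : aForm φ lam u (discretePow e μ α v) = aPowh e μ (α + 1) u v := by
  rw [discretePow_apply, aForm_sum_smul_right φ lam hlam (hSV u hu) fun i _ => hSV _ (he.mem i)]
  refine Finset.sum_congr rfl fun i _ => ?_
  rw [he.aForm_right_eq hu, Real.rpow_add_one (he.pos i).ne']
  ring

lemma aForm_eq_aForm_ritz (hlam : ∀ k, 0 ≤ lam k) (hSV : ∀ v ∈ S, MemHs φ lam 1 v)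
    {Rh : H → H} (hRhS : ∀ v, Rh v ∈ S)
    (hRitz : ∀ v, MemHs φ lam 1 v → ∀ χ ∈ S, aForm φ lam (Rh v - v) χ = 0)
    {f χ : H} (hf : MemHs φ lam 1 f) (hχ : χ ∈ S) : aForm φ lam f χ = aForm φ lam (Rh f) χ := by
  have h := hRitz f hf χ hχ
  rw [aForm_sub_left φ lam hlam (hSV _ (hRhS f)) hf (hSV χ hχ)] at h
  linarith

lemma IsDiscreteEigenbasis.intervalIntegrable_inner_ritz (he : IsDiscreteEigenbasis φ lam S e μ)
    (hlam : ∀ k, 0 ≤ lam k) (hSV : ∀ v ∈ S, MemHs φ lam 1 v) {Rh : H → H}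
    (hRhS : ∀ v, Rh v ∈ S)
    (hRitz : ∀ v, MemHs φ lam 1 v → ∀ χ ∈ S, aForm φ lam (Rh v - v) χ = 0)
    {f : ℝ → H} {a b : ℝ} (hf : AEStronglyMeasurable f volume) (hfV : ∀ t, MemHs φ lam 1 (f t))
    (hfi : IntervalIntegrable (fun t => hsNorm φ lam 1 (f t)) volume a b) (i : Fin m) :
    IntervalIntegrable (fun t => ⟪Rh (f t), e i⟫) volume a b := by
  have h : ∀ t, ⟪Rh (f t), e i⟫ = (μ i)⁻¹ * aForm φ lam (f t) (e i) := fun t => by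
    rw [aForm_eq_aForm_ritz hlam hSV hRhS hRitz (hfV t) (he.mem i), he.aForm_right_eq (hRhS _),
      inv_mul_cancel_left₀ (he.pos i).ne']
  simp_rw [h]
  exact (intervalIntegrable_aForm_left φ lam hlam hf hfV hfi (hSV _ (he.mem i))).const_mul _

lemma inner_proj_eq {Ph : H → H} (hPh : ∀ v, ∀ χ ∈ S, ⟪Ph v - v, χ⟫ = 0) (f : H) {χ : H}
    (hχ : χ ∈ S) : ⟪Ph f, χ⟫ = ⟪f, χ⟫ := by
  rw [← sub_eq_zero, ← inner_sub_left]
  exact hPh f χ hχ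

lemma intervalIntegrable_inner_proj {Ph : H → H} (hPh : ∀ v, ∀ χ ∈ S, ⟪Ph v - v, χ⟫ = 0)
    {f : ℝ → H} {a b : ℝ} (hf : IntervalIntegrable f volume a b) {χ : H} (hχ : χ ∈ S) :
    IntervalIntegrable (fun t => ⟪Ph (f t), χ⟫) volume a b := by
  simp_rw [inner_proj_eq hPh _ hχ]
  exact ⟨hf.1.inner_const χ, hf.2.inner_const χ⟩

end DiscreteEigenbasis

section PiecewisePolynomials
variable {H : Type*} [NormedAddCommGroup H] [InnerProductSpace ℝ H]

lemma hasDerivAt_pval (q : ℕ) (c : ℕ → ℕ → H) (n : ℕ) (s : ℝ) :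
    HasDerivAt (pval q c n) (pderiv q c n s) s :=
  HasDerivAt.fun_sum fun j _ => (hasDerivAt_pow j s).smul_const (c n j)

@[fun_prop]
lemma continuous_pval (q : ℕ) (c : ℕ → ℕ → H) (n : ℕ) : Continuous (pval q c n) := by
  unfold pval; fun_prop

@[fun_prop]
lemma continuous_pderiv (q : ℕ) (c : ℕ → ℕ → H) (n : ℕ) : Continuous (pderiv q c n) := by
  unfold pderiv; fun_prop

lemma pval_mem {S : Submodule ℝ H} {c : ℕ → ℕ → H} (hc : ∀ n j, c n j ∈ S) (q n : ℕ) (s : ℝ) :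
    pval q c n s ∈ S :=
  S.sum_mem fun j _ => S.smul_mem _ (hc n j)

lemma pderiv_mem {S : Submodule ℝ H} {c : ℕ → ℕ → H} (hc : ∀ n j, c n j ∈ S) (q n : ℕ) (s : ℝ) :
    pderiv q c n s ∈ S :=
  S.sum_mem fun j _ => S.smul_mem _ (hc n j)

def truncTest (M : ℕ) (L : H →ₗ[ℝ] H) (c : ℕ → ℕ → H) : ℕ → ℕ → H :=
  fun n j => if n ≤ M then L (c n j) else 0

lemma pval_truncTest (M : ℕ) (L : H →ₗ[ℝ] H) (q : ℕ) (c : ℕ → ℕ → H) (n : ℕ) (s : ℝ) :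
    pval q (truncTest M L c) n s = if n ≤ M then L (pval q c n s) else 0 := by
  unfold pval truncTest
  split_ifs <;> simp

lemma truncTest_mem {S : Submodule ℝ H} {L : H →ₗ[ℝ] H} (hL : ∀ v, L v ∈ S) (M : ℕ)
    (c : ℕ → ℕ → H) (n j : ℕ) : truncTest M L c n j ∈ S := by
  unfold truncTest
  split_ifs
  exacts [hL _, S.zero_mem]

lemma exists_inner_pval_eq_affine {q : ℕ} (hq : q ≤ 1) (c : ℕ → ℕ → H) (n : ℕ) (v : H) :
    ∃ x y : ℝ, ∀ t, ⟪pval q c n t, v⟫ = x + t * y := by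
  interval_cases q
  · exact ⟨⟪c n 0, v⟫, 0, fun t => by simp [pval]⟩
  · exact ⟨⟪c n 0, v⟫, ⟪c n 1, v⟫, fun t => by
      simp [pval, Finset.sum_range_succ, inner_add_left, real_inner_smul_left]⟩

variable {m : ℕ} (e : Fin m → H) (μ : Fin m → ℝ)

lemma hasDerivAt_hNormSqh_pval (α : ℝ) (q : ℕ) (c : ℕ → ℕ → H) (n : ℕ) (s : ℝ) :
    HasDerivAt (fun t => hNormSqh e μ α (pval q c n t))
      (2 * aPowh e μ α (pderiv q c n s) (pval q c n s)) s := by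
  unfold hNormSqh aPowh
  rw [Finset.mul_sum]
  refine HasDerivAt.fun_sum fun i _ => ?_
  have hi : HasDerivAt (fun t => ⟪pval q c n t, e i⟫) ⟪pderiv q c n s, e i⟫ s := by
    simpa using (hasDerivAt_pval q c n s).inner ℝ (hasDerivAt_const s (e i))
  exact ((hi.fun_pow 2).const_mul (μ i ^ α)).congr_deriv (by push_cast; ring)

lemma integral_aPowh_pderiv_pval (α : ℝ) (q : ℕ) (c : ℕ → ℕ → H) (n : ℕ) (a b : ℝ) :
    ∫ s in a..b, aPowh e μ α (pderiv q c n s) (pval q c n s)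
      = (hNormSqh e μ α (pval q c n b) - hNormSqh e μ α (pval q c n a)) / 2 := by
  have h := intervalIntegral.integral_eq_sub_of_hasDerivAt
    (fun s _ => hasDerivAt_hNormSqh_pval e μ α q c n s)
    (Continuous.intervalIntegrable (by unfold aPowh; fun_prop) a b)
  rw [intervalIntegral.integral_const_mul] at h
  linarith

lemma convexOn_hNormSqh_pval (hμ : ∀ i, 0 ≤ μ i)
    (α : ℝ) {q : ℕ} (hq : q ≤ 1) (c : ℕ → ℕ → H) (n : ℕ) :
    ConvexOn ℝ univ fun t => hNormSqh e μ α (pval q c n t) := by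
  refine convexOn_finsetSum convex_univ _ fun i _ => ?_
  obtain ⟨x, y, hxy⟩ := exists_inner_pval_eq_affine hq c n (e i)
  simp_rw [hxy]
  exact convexOn_mul_sq_add_mul (Real.rpow_nonneg (hμ i) α) x y

end PiecewisePolynomials

section Energy
variable {H : Type*} [NormedAddCommGroup H] [InnerProductSpace ℝ H] {m : ℕ}
  (e : Fin m → H) (μ : Fin m → ℝ) (l : ℝ)

def pairEnergy (u v : H) : ℝ :=
  hNormSqh e μ (l + 1) u + hNormSqh e μ l v

variable (q : ℕ) (c1 c2 : ℕ → ℕ → H)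

/-- `nodeEnergy n (tt (n - 1))` and `nodeEnergy n (tt n)` are the energies of `U(t_{n-1}⁺)` and
`U(t_n⁻)`. -/
def nodeEnergy (n : ℕ) (t : ℝ) : ℝ :=
  pairEnergy e μ l (pval q c1 n t) (pval q c2 n t)

def jumpEnergy (n : ℕ) (t : ℝ) : ℝ :=
  pairEnergy e μ l (pval q c1 (n + 1) t - pval q c1 n t) (pval q c2 (n + 1) t - pval q c2 n t)

def sourcePairing (r1 r2 : ℝ → H) (n : ℕ) (s : ℝ) : ℝ :=
  aPowh e μ (l + 1) (r1 s) (pval q c1 n s) + aPowh e μ l (r2 s) (pval q c2 n s)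

variable {e μ}

lemma pairEnergy_nonneg (hμ : ∀ i, 0 ≤ μ i) (u v : H) : 0 ≤ pairEnergy e μ l u v :=
  add_nonneg (hNormSqh_nonneg e μ hμ _ u) (hNormSqh_nonneg e μ hμ _ v)

lemma nodeEnergy_nonneg (hμ : ∀ i, 0 ≤ μ i) (n : ℕ) (t : ℝ) :
    0 ≤ nodeEnergy e μ l q c1 c2 n t :=
  pairEnergy_nonneg l hμ _ _

lemma nodeEnergy_succ_le (hμ : ∀ i, 0 ≤ μ i) (n : ℕ) (t : ℝ) :
    nodeEnergy e μ l q c1 c2 (n + 1) t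
      ≤ 2 * nodeEnergy e μ l q c1 c2 n t + 2 * jumpEnergy e μ l q c1 c2 n t := by
  have h1 := hNormSqh_add_le e μ hμ (l + 1) (pval q c1 n t) (pval q c1 (n + 1) t - pval q c1 n t)
  have h2 := hNormSqh_add_le e μ hμ l (pval q c2 n t) (pval q c2 (n + 1) t - pval q c2 n t)
  simp only [add_sub_cancel] at h1 h2
  simp only [nodeEnergy, jumpEnergy, pairEnergy]
  linarith

lemma convexOn_nodeEnergy (hμ : ∀ i, 0 ≤ μ i) {q : ℕ} (hq : q ≤ 1) (n : ℕ) :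
    ConvexOn ℝ univ (nodeEnergy e μ l q c1 c2 n) :=
  (convexOn_hNormSqh_pval e μ hμ (l + 1) hq c1 n).add
    (convexOn_hNormSqh_pval e μ hμ l hq c2 n)

lemma integral_energyRate (n : ℕ) (a b : ℝ) :
    ∫ s in a..b, (aPowh e μ (l + 1) (pderiv q c1 n s) (pval q c1 n s)
        + aPowh e μ l (pderiv q c2 n s) (pval q c2 n s))
      = (nodeEnergy e μ l q c1 c2 n b - nodeEnergy e μ l q c1 c2 n a) / 2 := by
  rw [intervalIntegral.integral_add
    (Continuous.intervalIntegrable (by unfold aPowh; fun_prop) a b)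
    (Continuous.intervalIntegrable (by unfold aPowh; fun_prop) a b),
    integral_aPowh_pderiv_pval, integral_aPowh_pderiv_pval]
  simp only [nodeEnergy, pairEnergy]
  ring

lemma two_mul_pairing_jump (x y x' y' : H) :
    2 * (aPowh e μ (l + 1) (x - y) x + aPowh e μ l (x' - y') x')
      = pairEnergy e μ l x x' - pairEnergy e μ l y y' + pairEnergy e μ l (x - y) (x' - y') := by
  rw [mul_add, two_mul_aPowh_sub_left_self, two_mul_aPowh_sub_left_self]
  simp only [pairEnergy]
  ring

end Energy

section EnergyIdentity
variable {H : Type*} [NormedAddCommGroup H] [InnerProductSpace ℝ H] {φ : ℕ → H} {lam : ℕ → ℝ}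
  {S : Submodule ℝ H} {m : ℕ} {e : Fin m → H} {μ : Fin m → ℝ} {l : ℝ}
  {q : ℕ} {c1 c2 : ℕ → ℕ → H}

lemma integral_volumeTerm_truncTest
    (hA : ∀ u ∈ S, ∀ v, aForm φ lam u (discretePow e μ l v) = aPowh e μ (l + 1) u v)
    (hc1 : ∀ n j, c1 n j ∈ S) (hc2 : ∀ n j, c2 n j ∈ S) (M n : ℕ) (a b : ℝ) :
    (∫ s in a..b,
      (aForm φ lam (pderiv q c1 n s) (pval q (truncTest M (discretePow e μ l) c1) n s)
        - aForm φ lam (pval q c2 n s) (pval q (truncTest M (discretePow e μ l) c1) n s)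
        + ⟪pderiv q c2 n s, pval q (truncTest M (discretePow e μ l) c2) n s⟫
        + aForm φ lam (pval q c1 n s) (pval q (truncTest M (discretePow e μ l) c2) n s)))
      = if n ≤ M then (nodeEnergy e μ l q c1 c2 n b - nodeEnergy e μ l q c1 c2 n a) / 2
        else 0 := by
  simp only [pval_truncTest]
  split_ifs
  · rw [← integral_energyRate]
    refine intervalIntegral.integral_congr fun s _ => ?_
    simp only [hA _ (pderiv_mem hc1 q n s), hA _ (pval_mem hc2 q n s),
      hA _ (pval_mem hc1 q n s), inner_discretePow, aPowh_comm e μ (l + 1) (pval q c2 n s)]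
    ring
  · simp [aForm_zero_right]

lemma jumpTerm_truncTest
    (hA : ∀ u ∈ S, ∀ v, aForm φ lam u (discretePow e μ l v) = aPowh e μ (l + 1) u v)
    (hc1 : ∀ n j, c1 n j ∈ S) (M n : ℕ) (t : ℝ) :
    aForm φ lam (pval q c1 (n + 1) t - pval q c1 n t)
          (pval q (truncTest M (discretePow e μ l) c1) (n + 1) t)
        + ⟪pval q c2 (n + 1) t - pval q c2 n t,
          pval q (truncTest M (discretePow e μ l) c2) (n + 1) t⟫
      = if n + 1 ≤ M then
          (nodeEnergy e μ l q c1 c2 (n + 1) t - nodeEnergy e μ l q c1 c2 n t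
            + jumpEnergy e μ l q c1 c2 n t) / 2
        else 0 := by
  simp only [pval_truncTest]
  split_ifs
  · rw [hA _ (sub_mem (pval_mem hc1 q _ _) (pval_mem hc1 q _ _)), inner_discretePow,
      eq_div_iff two_ne_zero, mul_comm, two_mul_pairing_jump]
    rfl
  · simp [aForm_zero_right]

lemma initialTerm_truncTest
    (hA : ∀ u ∈ S, ∀ v, aForm φ lam u (discretePow e μ l v) = aPowh e μ (l + 1) u v)
    (hc1 : ∀ n j, c1 n j ∈ S) {M : ℕ} (hM : 1 ≤ M) (t : ℝ) :
    aForm φ lam (pval q c1 1 t) (pval q (truncTest M (discretePow e μ l) c1) 1 t)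
        + ⟪pval q c2 1 t, pval q (truncTest M (discretePow e μ l) c2) 1 t⟫
      = nodeEnergy e μ l q c1 c2 1 t := by
  simp only [pval_truncTest, if_pos hM, hA _ (pval_mem hc1 q _ _), inner_discretePow, aPowh_self]
  rfl

lemma two_mul_Bform_truncTest
    (hA : ∀ u ∈ S, ∀ v, aForm φ lam u (discretePow e μ l v) = aPowh e μ (l + 1) u v)
    (hc1 : ∀ n j, c1 n j ∈ S) (hc2 : ∀ n j, c2 n j ∈ S) (tt : ℕ → ℝ) {M N : ℕ} (hM : 1 ≤ M)
    (hMN : M ≤ N) :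
    2 * Bform φ lam tt N q c1 c2 (truncTest M (discretePow e μ l) c1)
        (truncTest M (discretePow e μ l) c2)
      = nodeEnergy e μ l q c1 c2 M (tt M)
        + ∑ n ∈ Finset.Icc 1 (M - 1), jumpEnergy e μ l q c1 c2 n (tt n)
        + nodeEnergy e μ l q c1 c2 1 (tt 0) := by
  have htel := sum_Icc_sub_add_sum_Icc_sub (fun n => nodeEnergy e μ l q c1 c2 n (tt n))
    (fun n => nodeEnergy e μ l q c1 c2 n (tt (n - 1))) hM
  simp only [Nat.add_sub_cancel] at htel
  rw [Bform, add_assoc _ (aForm _ _ _ _), initialTerm_truncTest hA hc1 hM]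
  simp only [integral_volumeTerm_truncTest hA hc1 hc2, jumpTerm_truncTest hA hc1,
    show ∀ n, n + 1 ≤ M ↔ n ≤ M - 1 from fun n => by omega]
  rw [sum_Icc_ite_le hMN, sum_Icc_ite_le (by omega : M - 1 ≤ N - 1), ← Finset.sum_div,
    ← Finset.sum_div, Finset.sum_add_distrib]
  linarith

lemma sum_integral_truncTest {f1 f2 r1 r2 : ℝ → H}
    (hr1 : ∀ s v, aForm φ lam (f1 s) (discretePow e μ l v) = aPowh e μ (l + 1) (r1 s) v)
    (hr2 : ∀ s v, ⟪f2 s, discretePow e μ l v⟫ = aPowh e μ l (r2 s) v) (tt : ℕ → ℝ) {M N : ℕ}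
    (hMN : M ≤ N) :
    ∑ n ∈ Finset.Icc 1 N, ∫ s in tt (n - 1)..tt n,
        (aForm φ lam (f1 s) (pval q (truncTest M (discretePow e μ l) c1) n s)
          + ⟪f2 s, pval q (truncTest M (discretePow e μ l) c2) n s⟫)
      = ∑ n ∈ Finset.Icc 1 M, ∫ s in tt (n - 1)..tt n, sourcePairing e μ l q c1 c2 r1 r2 n s := by
  rw [← sum_Icc_ite_le hMN]
  refine Finset.sum_congr rfl fun n _ => ?_
  simp only [pval_truncTest]
  split_ifs
  · simp only [hr1, hr2, sourcePairing]
  · simp [aForm_zero_right]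

lemma energy_identity {f1 f2 r1 r2 : ℝ → H}
    (hA : ∀ u ∈ S, ∀ v, aForm φ lam u (discretePow e μ l v) = aPowh e μ (l + 1) u v)
    (hr1 : ∀ s v, aForm φ lam (f1 s) (discretePow e μ l v) = aPowh e μ (l + 1) (r1 s) v)
    (hr2 : ∀ s v, ⟪f2 s, discretePow e μ l v⟫ = aPowh e μ l (r2 s) v)
    (hD : ∀ v, discretePow e μ l v ∈ S) (hc1 : ∀ n j, c1 n j ∈ S) (hc2 : ∀ n j, c2 n j ∈ S)
    {tt : ℕ → ℝ} {N : ℕ}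
    (hU : ∀ d1 d2 : ℕ → ℕ → H, (∀ n j, d1 n j ∈ S) → (∀ n j, d2 n j ∈ S) →
      Bform φ lam tt N q c1 c2 d1 d2 =
        ∑ n ∈ Finset.Icc 1 N, ∫ s in tt (n-1)..tt n,
          (aForm φ lam (f1 s) (pval q d1 n s) + ⟪f2 s, pval q d2 n s⟫))
    {M : ℕ} (hM : 1 ≤ M) (hMN : M ≤ N) :
    nodeEnergy e μ l q c1 c2 M (tt M)
        + ∑ n ∈ Finset.Icc 1 (M - 1), jumpEnergy e μ l q c1 c2 n (tt n)
        + nodeEnergy e μ l q c1 c2 1 (tt 0)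
      = 2 * ∑ n ∈ Finset.Icc 1 M, ∫ s in tt (n - 1)..tt n,
          sourcePairing e μ l q c1 c2 r1 r2 n s := by
  rw [← two_mul_Bform_truncTest hA hc1 hc2 tt hM hMN,
    hU _ _ (truncTest_mem hD M c1) (truncTest_mem hD M c2), sum_integral_truncTest hr1 hr2 tt hMN]

lemma sourcePairing_le (hμ : ∀ i, 0 ≤ μ i) (r1 r2 : ℝ → H) {n : ℕ} {s S1 S2 : ℝ}
    (h1 : hNormh e μ (l + 1) (pval q c1 n s) ≤ S1) (h2 : hNormh e μ l (pval q c2 n s) ≤ S2) :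
    sourcePairing e μ l q c1 c2 r1 r2 n s
      ≤ (hNormh e μ (l + 1) (r1 s) + hNormh e μ l (r2 s)) * (S1 + S2) := by
  have h0 := hNormh_nonneg e μ
  have k1 := aPowh_le_hNormh_mul e μ hμ (l + 1) (r1 s) (pval q c1 n s)
  have k2 := aPowh_le_hNormh_mul e μ hμ l (r2 s) (pval q c2 n s)
  unfold sourcePairing
  nlinarith [mul_le_mul_of_nonneg_left h1 (h0 (l + 1) (r1 s)),
    mul_le_mul_of_nonneg_left h2 (h0 l (r2 s)), mul_nonneg (h0 (l + 1) (r1 s)) ((h0 l _).trans h2),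
    mul_nonneg (h0 l (r2 s)) ((h0 (l + 1) _).trans h1)]

lemma sum_integral_sourcePairing_le (hμ : ∀ i, 0 ≤ μ i) {tt : ℕ → ℝ} {N M : ℕ}
    (htt : ∀ n < N, tt n < tt (n + 1)) (hMN : M ≤ N) {r1 r2 : ℝ → H}
    (hr1 : ∀ i, IntervalIntegrable (fun t => ⟪r1 t, e i⟫) volume (tt 0) (tt N))
    (hr2 : ∀ i, IntervalIntegrable (fun t => ⟪r2 t, e i⟫) volume (tt 0) (tt N)) {U1 U2 : ℝ → H}
    (hU1 : ∀ n ∈ Finset.Icc 1 N, ∀ t ∈ Ioc (tt (n - 1)) (tt n), U1 t = pval q c1 n t)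
    (hU2 : ∀ n ∈ Finset.Icc 1 N, ∀ t ∈ Ioc (tt (n - 1)) (tt n), U2 t = pval q c2 n t)
    {S1 S2 : ℝ} (hS : 0 ≤ S1 + S2)
    (hS1 : ∀ t ∈ Ioo (tt 0) (tt N), hNormh e μ (l + 1) (U1 t) ≤ S1)
    (hS2 : ∀ t ∈ Ioo (tt 0) (tt N), hNormh e μ l (U2 t) ≤ S2) :
    ∑ n ∈ Finset.Icc 1 M, ∫ s in tt (n - 1)..tt n, sourcePairing e μ l q c1 c2 r1 r2 n s
      ≤ (∫ t in tt 0..tt N, (hNormh e μ (l + 1) (r1 t) + hNormh e μ l (r2 t))) * (S1 + S2) := by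
  rw [← intervalIntegral.integral_mul_const]
  refine sum_integral_le_integral htt hMN
    (((intervalIntegrable_hNormh e μ hμ (l + 1) hr1).add
      (intervalIntegrable_hNormh e μ hμ l hr2)).mul_const _)
    (fun t => mul_nonneg (add_nonneg (hNormh_nonneg e μ _ _) (hNormh_nonneg e μ _ _)) hS)
    (fun n _ => (intervalIntegrable_aPowh e μ (l + 1) hr1 (continuous_pval q c1 n)).add
      (intervalIntegrable_aPowh e μ l hr2 (continuous_pval q c2 n)))
    fun n hn s hs => sourcePairing_le hμ r1 r2
      (hU1 n hn s (Ioo_subset_Ioc_self hs) ▸ hS1 s (Ioo_mesh_subset htt hn hs))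
      (hU2 n hn s (Ioo_subset_Ioc_self hs) ▸ hS2 s (Ioo_mesh_subset htt hn hs))

lemma max_nodeEnergy_le (hlam : ∀ k, 0 ≤ lam k) (hSV : ∀ v ∈ S, MemHs φ lam 1 v)
    (he : IsDiscreteEigenbasis φ lam S e μ) {Rh Ph : H → H} (hRhS : ∀ v, Rh v ∈ S)
    (hRitz : ∀ v, MemHs φ lam 1 v → ∀ χ ∈ S, aForm φ lam (Rh v - v) χ = 0)
    (hPh : ∀ v, ∀ χ ∈ S, ⟪Ph v - v, χ⟫ = 0) {tt : ℕ → ℝ} {N : ℕ}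
    (htt : ∀ n < N, tt n < tt (n + 1)) {f1 f2 : ℝ → H} (hf1 : AEStronglyMeasurable f1 volume)
    (hf1V : ∀ t, MemHs φ lam 1 (f1 t))
    (hf1i : IntervalIntegrable (fun t => hsNorm φ lam 1 (f1 t)) volume (tt 0) (tt N))
    (hf2i : IntervalIntegrable f2 volume (tt 0) (tt N))
    (hc1 : ∀ n j, c1 n j ∈ S) (hc2 : ∀ n j, c2 n j ∈ S)
    (hU : ∀ d1 d2 : ℕ → ℕ → H, (∀ n j, d1 n j ∈ S) → (∀ n j, d2 n j ∈ S) →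
      Bform φ lam tt N q c1 c2 d1 d2 =
        ∑ n ∈ Finset.Icc 1 N, ∫ s in tt (n-1)..tt n,
          (aForm φ lam (f1 s) (pval q d1 n s) + ⟪f2 s, pval q d2 n s⟫))
    {U1 U2 : ℝ → H}
    (hU1 : ∀ n ∈ Finset.Icc 1 N, ∀ t ∈ Ioc (tt (n - 1)) (tt n), U1 t = pval q c1 n t)
    (hU2 : ∀ n ∈ Finset.Icc 1 N, ∀ t ∈ Ioc (tt (n - 1)) (tt n), U2 t = pval q c2 n t)
    {S1 S2 : ℝ} (hS : 0 ≤ S1 + S2)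
    (hS1 : ∀ t ∈ Ioo (tt 0) (tt N), hNormh e μ (l + 1) (U1 t) ≤ S1)
    (hS2 : ∀ t ∈ Ioo (tt 0) (tt N), hNormh e μ l (U2 t) ≤ S2) :
    ∀ n ∈ Finset.Icc 1 N,
      max (nodeEnergy e μ l q c1 c2 n (tt (n - 1))) (nodeEnergy e μ l q c1 c2 n (tt n))
        ≤ 4 * (2 * ((∫ t in tt 0..tt N,
          (hNormh e μ (l + 1) (Rh (f1 t)) + hNormh e μ l (Ph (f2 t)))) * (S1 + S2))) := by
  have hμ : ∀ i, 0 ≤ μ i := fun i => (he.pos i).le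
  have hD : ∀ v, discretePow e μ l v ∈ S := discretePow_mem e μ he.mem l
  have hA : ∀ u ∈ S, ∀ v, aForm φ lam u (discretePow e μ l v) = aPowh e μ (l + 1) u v :=
    fun u hu v => he.aForm_discretePow hlam hSV hu l v
  have hr1 : ∀ s v, aForm φ lam (f1 s) (discretePow e μ l v)
      = aPowh e μ (l + 1) (Rh (f1 s)) v := fun s v => by
    rw [aForm_eq_aForm_ritz hlam hSV hRhS hRitz (hf1V s) (hD v), hA _ (hRhS _)]
  have hr2 : ∀ s v, ⟪f2 s, discretePow e μ l v⟫ = aPowh e μ l (Ph (f2 s)) v := fun s v => by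
    rw [← inner_proj_eq hPh _ (hD v), inner_discretePow]
  refine max_le_of_energy_identity (J := fun n => jumpEnergy e μ l q c1 c2 n (tt n))
    (nodeEnergy_nonneg l q c1 c2 hμ) (fun n => pairEnergy_nonneg l hμ _ _) (fun M hM => ?_)
    (fun n => nodeEnergy_succ_le l q c1 c2 hμ n (tt n))
  rw [Finset.mem_Icc] at hM
  rw [energy_identity hA hr1 hr2 hD hc1 hc2 hU hM.1 hM.2]
  gcongr
  exact sum_integral_sourcePairing_le hμ htt hM.2
    (he.intervalIntegrable_inner_ritz hlam hSV hRhS hRitz hf1 hf1V hf1i)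
    (fun i => intervalIntegrable_inner_proj hPh hf2i (he.mem i)) hU1 hU2 hS hS1 hS2

end EnergyIdentity

section Supremum
variable {H : Type*} [NormedAddCommGroup H] [InnerProductSpace ℝ H] {m : ℕ}
  {e : Fin m → H} {μ : Fin m → ℝ} (l : ℝ)

lemma sq_hNormh_add_sq_hNormh (hμ : ∀ i, 0 ≤ μ i) (u v : H) :
    hNormh e μ (l + 1) u ^ 2 + hNormh e μ l v ^ 2 = pairEnergy e μ l u v := by
  rw [hNormh_sq e μ hμ, hNormh_sq e μ hμ, pairEnergy]

lemma pairEnergy_le_of_max_nodeEnergy_le (hμ : ∀ i, 0 ≤ μ i) {q : ℕ} (hq : q ≤ 1)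
    {c1 c2 : ℕ → ℕ → H} {tt : ℕ → ℝ} {N : ℕ} {U1 U2 : ℝ → H}
    (hU1 : ∀ n ∈ Finset.Icc 1 N, ∀ t ∈ Ioc (tt (n - 1)) (tt n), U1 t = pval q c1 n t)
    (hU2 : ∀ n ∈ Finset.Icc 1 N, ∀ t ∈ Ioc (tt (n - 1)) (tt n), U2 t = pval q c2 n t) (X : ℝ)
    (hX : ∀ n ∈ Finset.Icc 1 N,
      max (nodeEnergy e μ l q c1 c2 n (tt (n - 1))) (nodeEnergy e μ l q c1 c2 n (tt n)) ≤ X) :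
    ∀ t ∈ Ioc (tt 0) (tt N), pairEnergy e μ l (U1 t) (U2 t) ≤ X := by
  intro t ht
  obtain ⟨n, hn, htn⟩ := exists_mem_Icc_mem_Ioc ht
  rw [hU1 n hn t htn, hU2 n hn t htn]
  refine le_trans ?_ (hX n hn)
  exact (convexOn_nodeEnergy l c1 c2 hμ hq n).le_on_segment (mem_univ _) (mem_univ _)
    (segment_eq_Icc (htn.1.le.trans htn.2) ▸ Ioc_subset_Icc_self htn)

lemma bddAbove_hNormh_of_pairEnergy_le (hμ : ∀ i, 0 ≤ μ i) {U1 U2 : ℝ → H} {A : Set ℝ}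
    {X : ℝ} (h : ∀ t ∈ A, pairEnergy e μ l (U1 t) (U2 t) ≤ X) :
    BddAbove ((fun t => hNormh e μ (l + 1) (U1 t)) '' A)
      ∧ BddAbove ((fun t => hNormh e μ l (U2 t)) '' A) := by
  simp_rw [← sq_hNormh_add_sq_hNormh l hμ] at h
  exact ⟨bddAbove_image_of_sq_le fun t ht => by
      nlinarith [h t ht, sq_nonneg (hNormh e μ l (U2 t))],
    bddAbove_image_of_sq_le fun t ht => by
      nlinarith [h t ht, sq_nonneg (hNormh e μ (l + 1) (U1 t))]⟩

lemma bddAbove_hNormh_of_eq_pval (hμ : ∀ i, 0 ≤ μ i) {q : ℕ} (hq : q ≤ 1)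
    {c1 c2 : ℕ → ℕ → H} {tt : ℕ → ℝ} {N : ℕ} {U1 U2 : ℝ → H}
    (hU1 : ∀ n ∈ Finset.Icc 1 N, ∀ t ∈ Ioc (tt (n - 1)) (tt n), U1 t = pval q c1 n t)
    (hU2 : ∀ n ∈ Finset.Icc 1 N, ∀ t ∈ Ioc (tt (n - 1)) (tt n), U2 t = pval q c2 n t) :
    BddAbove ((fun t => hNormh e μ (l + 1) (U1 t)) '' Ioo (tt 0) (tt N))
      ∧ BddAbove ((fun t => hNormh e μ l (U2 t)) '' Ioo (tt 0) (tt N)) :=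
  bddAbove_hNormh_of_pairEnergy_le l hμ fun t ht =>
    pairEnergy_le_of_max_nodeEnergy_le l hμ hq hU1 hU2 _ (fun _ hn =>
      Finset.single_le_sum (fun k _ => (nodeEnergy_nonneg l q c1 c2 hμ k (tt (k - 1))).trans
        (le_max_left _ (nodeEnergy e μ l q c1 c2 k (tt k)))) hn) t (Ioo_subset_Ioc_self ht)

lemma supIoo_add_supIoo_le_of_pairEnergy_le (hμ : ∀ i, 0 ≤ μ i) {U1 U2 : ℝ → H} {a b K : ℝ}
    (hab : a < b) (hK : 0 ≤ K)
    (h : ∀ t ∈ Ioo a b, pairEnergy e μ l (U1 t) (U2 t)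
      ≤ K * (supIoo (fun t => hNormh e μ (l + 1) (U1 t)) a b
        + supIoo (fun t => hNormh e μ l (U2 t)) a b)) :
    supIoo (fun t => hNormh e μ (l + 1) (U1 t)) a b + supIoo (fun t => hNormh e μ l (U2 t)) a b
      ≤ 4 * K := by
  obtain ⟨hb1, hb2⟩ := bddAbove_hNormh_of_pairEnergy_le l hμ h
  simp_rw [← sq_hNormh_add_sq_hNormh l hμ] at h
  exact add_le_of_sq_le_mul_add (supIoo_nonneg hab (fun _ => hNormh_nonneg e μ _ _) hb1)
    (supIoo_nonneg hab (fun _ => hNormh_nonneg e μ _ _) hb2) hK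
    (sq_supIoo_le hab (fun _ => hNormh_nonneg e μ _ _) fun t ht => by
      nlinarith [h t ht, sq_nonneg (hNormh e μ l (U2 t))])
    (sq_supIoo_le hab (fun _ => hNormh_nonneg e μ _ _) fun t ht => by
      nlinarith [h t ht, sq_nonneg (hNormh e μ (l + 1) (U1 t))])

end Supremum

theorem dGcG_uniform_stability_general
    {H : Type*} [NormedAddCommGroup H] [InnerProductSpace ℝ H]
    (φ : ℕ → H) (lam : ℕ → ℝ)
    (hlam_pos : ∀ k, 0 < lam k)
    (q : ℕ) (hq : q = 0 ∨ q = 1) (l : ℝ) :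
    ∃ C : ℝ, 0 < C ∧
      ∀ (T : ℝ), 0 < T → ∀ (N : ℕ), 1 ≤ N →
      ∀ tt : ℕ → ℝ, tt 0 = 0 → tt N = T → (∀ n < N, tt n < tt (n + 1)) →
      -- the finite element space S_h ⊂ V together with an orthonormal
      -- eigenbasis (e,μ) of A_h on S_h, and the projections R_h, P_h
      ∀ S : Submodule ℝ H, FiniteDimensional ℝ S → (∀ v ∈ S, MemHs φ lam 1 v) →
      ∀ (m : ℕ) (e : Fin m → H) (μ : Fin m → ℝ),
      Orthonormal ℝ e → (∀ i, e i ∈ S) →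
      (∀ v ∈ S, v = ∑ i, ⟪v, e i⟫ • e i) →
      (∀ i, 0 < μ i) →
      (∀ i, ∀ w ∈ S, aForm φ lam (e i) w = μ i * ⟪e i, w⟫) →
      ∀ Rh Ph : H → H,
      (∀ v, Rh v ∈ S) →
      (∀ v, MemHs φ lam 1 v → ∀ χ ∈ S, aForm φ lam (Rh v - v) χ = 0) →
      (∀ v, Ph v ∈ S) →
      (∀ v, ∀ χ ∈ S, ⟪Ph v - v, χ⟫ = 0) →
      -- the data
      ∀ f1 f2 : ℝ → H,
      AEStronglyMeasurable f1 volume → AEStronglyMeasurable f2 volume →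
      (∀ t, MemHs φ lam 1 (f1 t)) →
      IntervalIntegrable (fun t => hsNorm φ lam 1 (f1 t)) volume 0 T →
      IntervalIntegrable f2 volume 0 T →
      -- U = (U₁,U₂) ∈ 𝒱_{h,q}
      ∀ c1 c2 : ℕ → ℕ → H,
      (∀ n j, c1 n j ∈ S) → (∀ n j, c2 n j ∈ S) →
      -- the generalized discrete problem with u_{h,0} = 0 and v_{h,0} = 0
      (∀ d1 d2 : ℕ → ℕ → H, (∀ n j, d1 n j ∈ S) → (∀ n j, d2 n j ∈ S) →
        Bform φ lam tt N q c1 c2 d1 d2 =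
          ∑ n ∈ Finset.Icc 1 N, ∫ s in tt (n-1)..tt n,
            (aForm φ lam (f1 s) (pval q d1 n s) + ⟪f2 s, pval q d2 n s⟫)) →
      -- U₁, U₂ as functions of time (left-continuous piecewise polynomials)
      ∀ U1f U2f : ℝ → H,
      (∀ n ∈ Finset.Icc 1 N, ∀ t ∈ Set.Ioc (tt (n-1)) (tt n), U1f t = pval q c1 n t) →
      (∀ n ∈ Finset.Icc 1 N, ∀ t ∈ Set.Ioc (tt (n-1)) (tt n), U2f t = pval q c2 n t) →
      (BddAbove ((fun t => hNormh e μ (l+1) (U1f t)) '' Set.Ioo 0 T) ∧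
       BddAbove ((fun t => hNormh e μ l (U2f t)) '' Set.Ioo 0 T) ∧
       supIoo (fun t => hNormh e μ (l+1) (U1f t)) 0 T
          + supIoo (fun t => hNormh e μ l (U2f t)) 0 T
        ≤ C * ∫ t in (0:ℝ)..T,
            (hNormh e μ (l+1) (Rh (f1 t)) + hNormh e μ l (Ph (f2 t)))) := by
  refine ⟨32, by norm_num, ?_⟩
  intro T hT N _ tt htt0 httN htt S _ hSV m e μ _ heS _ hμ heig Rh Ph hRhS hRitz _ hPh
    f1 f2 hf1m _ hf1V hf1int hf2int c1 c2 hc1S hc2S hU U1f U2f hU1 hU2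
  subst httN
  rw [← htt0] at hT hf1int hf2int ⊢
  have hμ0 : ∀ i, 0 ≤ μ i := fun i => (hμ i).le
  have hq1 : q ≤ 1 := by omega
  obtain ⟨hb1, hb2⟩ := bddAbove_hNormh_of_eq_pval (e := e) (μ := μ) l hμ0 hq1 hU1 hU2
  refine ⟨hb1, hb2, ?_⟩
  have hS : 0 ≤ supIoo (fun t => hNormh e μ (l + 1) (U1f t)) (tt 0) (tt N)
      + supIoo (fun t => hNormh e μ l (U2f t)) (tt 0) (tt N) :=
    add_nonneg (supIoo_nonneg hT (fun _ => hNormh_nonneg e μ _ _) hb1)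
      (supIoo_nonneg hT (fun _ => hNormh_nonneg e μ _ _) hb2)
  have hnode := max_nodeEnergy_le (fun k => (hlam_pos k).le) hSV ⟨heS, hμ, heig⟩ hRhS hRitz hPh
    htt hf1m hf1V hf1int hf2int hc1S hc2S hU hU1 hU2 hS
    (fun t ht => le_csSup hb1 ⟨t, ht, rfl⟩) (fun t ht => le_csSup hb2 ⟨t, ht, rfl⟩)
  have hK :
      0 ≤ 8 * ∫ t in tt 0..tt N, (hNormh e μ (l + 1) (Rh (f1 t)) + hNormh e μ l (Ph (f2 t))) :=
    mul_nonneg (by norm_num) (intervalIntegral.integral_nonneg hT.le fun t _ =>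
      add_nonneg (hNormh_nonneg e μ _ _) (hNormh_nonneg e μ _ _))
  exact (supIoo_add_supIoo_le_of_pairEnergy_le l hμ0 hT hK fun t ht =>
    (pairEnergy_le_of_max_nodeEnergy_le l hμ0 hq1 hU1 hU2 _ hnode t
      (Ioo_subset_Ioc_self ht)).trans_eq (by ring)).trans_eq (by ring)

/-- **Uniform-in-time stability of the full discretization dG(q)–cG(r), q ∈ {0,1},
with vanishing initial data.**
`sup_{(0,T)} ‖U₁‖_{h,l+1} + sup_{(0,T)} ‖U₂‖_{h,l}
  ≤ C ∫₀ᵀ (‖R_h f₁‖_{h,l+1} + ‖P_h f₂‖_{h,l})`. -/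
theorem dGcG_uniform_stability
    {H : Type*} [NormedAddCommGroup H] [InnerProductSpace ℝ H] [CompleteSpace H]
    (φ : ℕ → H) (lam : ℕ → ℝ)
    (hφ : Orthonormal ℝ φ)
    (hφtotal : (Submodule.span ℝ (Set.range φ)).topologicalClosure = ⊤)
    (hlam_pos : ∀ k, 0 < lam k) (hlam_mono : Monotone lam)
    (hlam_top : Filter.Tendsto lam Filter.atTop Filter.atTop)
    (q : ℕ) (hq : q = 0 ∨ q = 1) (l : ℝ) :
    ∃ C : ℝ, 0 < C ∧
      ∀ (T : ℝ), 0 < T → ∀ (N : ℕ), 1 ≤ N →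
      ∀ tt : ℕ → ℝ, tt 0 = 0 → tt N = T → (∀ n < N, tt n < tt (n + 1)) →
      -- the finite element space S_h ⊂ V together with an orthonormal
      -- eigenbasis (e,μ) of A_h on S_h, and the projections R_h, P_h
      ∀ S : Submodule ℝ H, FiniteDimensional ℝ S → (∀ v ∈ S, MemHs φ lam 1 v) →
      ∀ (m : ℕ) (e : Fin m → H) (μ : Fin m → ℝ),
      Orthonormal ℝ e → (∀ i, e i ∈ S) →
      (∀ v ∈ S, v = ∑ i, ⟪v, e i⟫ • e i) →
      (∀ i, 0 < μ i) →
      (∀ i, ∀ w ∈ S, aForm φ lam (e i) w = μ i * ⟪e i, w⟫) →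
      ∀ Rh Ph : H → H,
      (∀ v, Rh v ∈ S) →
      (∀ v, MemHs φ lam 1 v → ∀ χ ∈ S, aForm φ lam (Rh v - v) χ = 0) →
      (∀ v, Ph v ∈ S) →
      (∀ v, ∀ χ ∈ S, ⟪Ph v - v, χ⟫ = 0) →
      -- the data
      ∀ f1 f2 : ℝ → H,
      AEStronglyMeasurable f1 volume → AEStronglyMeasurable f2 volume →
      (∀ t, MemHs φ lam 1 (f1 t)) →
      IntervalIntegrable (fun t => hsNorm φ lam 1 (f1 t)) volume 0 T →
      IntervalIntegrable f2 volume 0 T →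
      -- U = (U₁,U₂) ∈ 𝒱_{h,q}
      ∀ c1 c2 : ℕ → ℕ → H,
      (∀ n j, c1 n j ∈ S) → (∀ n j, c2 n j ∈ S) →
      -- the generalized discrete problem with u_{h,0} = 0 and v_{h,0} = 0
      (∀ d1 d2 : ℕ → ℕ → H, (∀ n j, d1 n j ∈ S) → (∀ n j, d2 n j ∈ S) →
        Bform φ lam tt N q c1 c2 d1 d2 =
          ∑ n ∈ Finset.Icc 1 N, ∫ s in tt (n-1)..tt n,
            (aForm φ lam (f1 s) (pval q d1 n s) + ⟪f2 s, pval q d2 n s⟫)) →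
      -- U₁, U₂ as functions of time (left-continuous piecewise polynomials)
      ∀ U1f U2f : ℝ → H,
      (∀ n ∈ Finset.Icc 1 N, ∀ t ∈ Set.Ioc (tt (n-1)) (tt n), U1f t = pval q c1 n t) →
      (∀ n ∈ Finset.Icc 1 N, ∀ t ∈ Set.Ioc (tt (n-1)) (tt n), U2f t = pval q c2 n t) →
      (BddAbove ((fun t => hNormh e μ (l+1) (U1f t)) '' Set.Ioo 0 T) ∧
       BddAbove ((fun t => hNormh e μ l (U2f t)) '' Set.Ioo 0 T) ∧
       supIoo (fun t => hNormh e μ (l+1) (U1f t)) 0 T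
          + supIoo (fun t => hNormh e μ l (U2f t)) 0 T
        ≤ C * ∫ t in (0:ℝ)..T,
            (hNormh e μ (l+1) (Rh (f1 t)) + hNormh e μ l (Ph (f2 t)))) :=
  dGcG_uniform_stability_general φ lam hlam_pos q hq l
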